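/- arXiv:1508.01056 — 3 statements merged into one kernel-verified Lean document; each statement's English description precedes it below -/
import Mathlib

section
/- Let A be an n×n real matrix, σ₁ > 0, and u, v ∈ ℝⁿ unit vectors with A v = σ₁ u and Aᵀ u = σ₁ v. Fix indices i, j and let Ã = A + e_i e_jᵀ be the matrix obtained by adding the (virtual) edge (i,j). Then the largest eigenvalue σ̃₁² of the new hub matrix ÃÃᵀ, which equals the largest eigenvalue of the new authority matrix ÃᵀÃ, satisfies σ̃₁² ≥ σ₁² + 2σ₁ u(i) v(j) + max{u(i)², v(j)²}. -/
open Matrix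

/-- The set of Rayleigh quotients `zᵀ M z` of `M` over unit vectors `z`; for a real
symmetric matrix, the largest eigenvalue is the greatest element of this set. -/
def raySet {n : ℕ} (M : Matrix (Fin n) (Fin n) ℝ) : Set ℝ :=
  {r | ∃ z : Fin n → ℝ, z ⬝ᵥ z = 1 ∧ r = z ⬝ᵥ (M *ᵥ z)}

/-!
Both `ÃÃᵀ` and `ÃᵀÃ` have the same largest Rayleigh quotient `σ̃₁²`: an upper bound
`‖Ãᵀz‖² ≤ s‖z‖²` transfers to `‖Ãw‖² ≤ s‖w‖²` by Cauchy–Schwarz, since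
`‖Ãw‖⁴ = ⟪ÃᵀÃw, w⟫² ≤ ‖ÃᵀÃw‖²‖w‖²`, and the maximiser `w` for `ÃÃᵀ` yields the maximiser
`Ãᵀw` for `ÃᵀÃ`. The lower bound then comes from testing `ÃÃᵀ` on `u` and `ÃᵀÃ` on `v`:
`Ãᵀu = σ₁v + u(i)e_j` and `Ãv = σ₁u + v(j)e_i` have squared norms
`σ₁² + 2σ₁u(i)v(j) + u(i)²` and `σ₁² + 2σ₁u(i)v(j) + v(j)²`.
-/

section DotProduct

variable {ι κ : Type*} [Fintype ι] [Fintype κ]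

lemma dotProduct_self_nonneg (x : ι → ℝ) : 0 ≤ x ⬝ᵥ x :=
  Finset.sum_nonneg fun _ _ => mul_self_nonneg _

lemma sq_dotProduct_le (x y : ι → ℝ) : (x ⬝ᵥ y) ^ 2 ≤ (x ⬝ᵥ x) * (y ⬝ᵥ y) := by
  simpa [dotProduct, pow_two] using Finset.sum_mul_sq_le_sq_mul_sq Finset.univ x y

lemma dotProduct_self_smul_add_smul_single [DecidableEq ι] (a c : ℝ) (x : ι → ℝ) (k : ι) :
    (a • x + c • Pi.single k 1) ⬝ᵥ (a • x + c • Pi.single k 1) =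
      a ^ 2 * (x ⬝ᵥ x) + 2 * a * c * x k + c ^ 2 := by
  simp only [add_dotProduct, dotProduct_add, smul_dotProduct, dotProduct_smul,
    dotProduct_single, single_dotProduct, Pi.add_apply, Pi.smul_apply, Pi.single_eq_same,
    smul_eq_mul, mul_one]
  ring

lemma mulVec_dotProduct_mulVec_self (M : Matrix κ ι ℝ) (w : ι → ℝ) :
    (M *ᵥ w) ⬝ᵥ (M *ᵥ w) = (Mᵀ *ᵥ M *ᵥ w) ⬝ᵥ w := by
  rw [dotProduct_mulVec, ← mulVec_transpose]

lemma add_single_one_mulVec [DecidableEq ι] {A : Matrix ι ι ℝ} {x y : ι → ℝ} {a : ℝ}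
    (hx : A *ᵥ x = a • y) (i j : ι) :
    (A + single i j 1) *ᵥ x = a • y + x j • Pi.single i 1 := by
  rw [add_mulVec, hx, single_mulVec_eq, one_mul]

lemma dotProduct_mul_transpose_mulVec (M : Matrix κ ι ℝ) (z : κ → ℝ) :
    z ⬝ᵥ (M * Mᵀ) *ᵥ z = (Mᵀ *ᵥ z) ⬝ᵥ (Mᵀ *ᵥ z) := by
  rw [← mulVec_mulVec, dotProduct_mulVec, ← mulVec_transpose]

lemma dotProduct_transpose_mul_mulVec (M : Matrix κ ι ℝ) (z : ι → ℝ) :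
    z ⬝ᵥ (Mᵀ * M) *ᵥ z = (M *ᵥ z) ⬝ᵥ (M *ᵥ z) := by
  simpa using dotProduct_mul_transpose_mulVec Mᵀ z

lemma mulVec_bound_of_transpose_mulVec_bound (M : Matrix ι ι ℝ) {s : ℝ}
    (h : ∀ z, (Mᵀ *ᵥ z) ⬝ᵥ (Mᵀ *ᵥ z) ≤ s * (z ⬝ᵥ z)) (w : ι → ℝ) :
    (M *ᵥ w) ⬝ᵥ (M *ᵥ w) ≤ s * (w ⬝ᵥ w) := by
  have hCS := sq_dotProduct_le (Mᵀ *ᵥ (M *ᵥ w)) w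
  rw [← mulVec_dotProduct_mulVec_self] at hCS
  have hMw := h (M *ᵥ w)
  have hsw : 0 ≤ s * (w ⬝ᵥ w) := (dotProduct_self_nonneg _).trans (h w)
  nlinarith [dotProduct_self_nonneg (M *ᵥ w), dotProduct_self_nonneg w]

end DotProduct

section Rayleigh

variable {n : ℕ}

lemma div_mem_raySet (M : Matrix (Fin n) (Fin n) ℝ) {z : Fin n → ℝ} (hz : 0 < z ⬝ᵥ z) :
    z ⬝ᵥ M *ᵥ z / (z ⬝ᵥ z) ∈ raySet M := by
  set t := Real.sqrt (z ⬝ᵥ z)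
  have ht : t ^ 2 = z ⬝ᵥ z := Real.sq_sqrt hz.le
  have ht0 : t ≠ 0 := (Real.sqrt_pos.mpr hz).ne'
  refine ⟨t⁻¹ • z, ?_, ?_⟩ <;>
    simp only [mulVec_smul, smul_dotProduct, dotProduct_smul, smul_eq_mul, ← ht] <;>
    field_simp

lemma mem_upperBounds_raySet_iff (M : Matrix (Fin n) (Fin n) ℝ) (s : ℝ) :
    s ∈ upperBounds (raySet M) ↔ ∀ z, z ⬝ᵥ M *ᵥ z ≤ s * (z ⬝ᵥ z) := by
  constructor
  · intro hs z
    rcases (dotProduct_self_nonneg z).eq_or_lt with hz | hz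
    · obtain rfl : z = 0 := dotProduct_self_eq_zero.mp hz.symm
      simp
    · exact (div_le_iff₀ hz).mp (hs (div_mem_raySet M hz))
  · rintro hs r ⟨z, hz, rfl⟩
    simpa [hz] using hs z

lemma mem_raySet_of_le (M : Matrix (Fin n) (Fin n) ℝ) {s : ℝ} (hs : s ∈ upperBounds (raySet M))
    {z : Fin n → ℝ} (hz : 0 < z ⬝ᵥ z) (hle : s * (z ⬝ᵥ z) ≤ z ⬝ᵥ M *ᵥ z) : s ∈ raySet M := by
  have hmem := div_mem_raySet M hz
  rwa [le_antisymm (hs hmem) ((le_div_iff₀ hz).mpr hle)] at hmem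

theorem IsGreatest.raySet_transpose_mul {M : Matrix (Fin n) (Fin n) ℝ} {s : ℝ}
    (hs : IsGreatest (raySet (M * Mᵀ)) s) : IsGreatest (raySet (Mᵀ * M)) s := by
  obtain ⟨⟨w, hw, rfl⟩, hub⟩ := hs
  rw [mem_upperBounds_raySet_iff] at hub
  simp only [dotProduct_mul_transpose_mulVec] at hub ⊢
  have hub' : (Mᵀ *ᵥ w) ⬝ᵥ (Mᵀ *ᵥ w) ∈ upperBounds (raySet (Mᵀ * M)) := by
    rw [mem_upperBounds_raySet_iff]
    intro z
    rw [dotProduct_transpose_mul_mulVec]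
    exact mulVec_bound_of_transpose_mulVec_bound M hub z
  refine ⟨?_, hub'⟩
  rcases (dotProduct_self_nonneg (Mᵀ *ᵥ w)).eq_or_lt with hs0 | hs0
  · -- `Mᵀw = 0` cannot be normalised, but then `w` itself attains the value `0`.
    refine mem_raySet_of_le _ hub' (by rw [hw]; exact one_pos) ?_
    rw [← hs0, zero_mul, dotProduct_transpose_mul_mulVec]
    exact dotProduct_self_nonneg _
  · refine mem_raySet_of_le _ hub' hs0 ?_
    have hgram : (Mᵀ *ᵥ w) ⬝ᵥ (Mᵀ *ᵥ w) = (M *ᵥ (Mᵀ *ᵥ w)) ⬝ᵥ w := by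
      simpa using mulVec_dotProduct_mulVec_self Mᵀ w
    calc (Mᵀ *ᵥ w) ⬝ᵥ (Mᵀ *ᵥ w) * (Mᵀ *ᵥ w) ⬝ᵥ (Mᵀ *ᵥ w)
        = ((M *ᵥ (Mᵀ *ᵥ w)) ⬝ᵥ w) ^ 2 := by rw [← hgram, sq]
      _ ≤ (M *ᵥ (Mᵀ *ᵥ w)) ⬝ᵥ (M *ᵥ (Mᵀ *ᵥ w)) * (w ⬝ᵥ w) := sq_dotProduct_le _ _
      _ = (Mᵀ *ᵥ w) ⬝ᵥ (Mᵀ * M) *ᵥ (Mᵀ *ᵥ w) := by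
        rw [hw, mul_one, dotProduct_transpose_mul_mulVec]

end Rayleigh

theorem stmt_5_general {n : ℕ} (A : Matrix (Fin n) (Fin n) ℝ) (σ₁ : ℝ)
    (u v : Fin n → ℝ) (hu : u ⬝ᵥ u = 1) (hv : v ⬝ᵥ v = 1)
    (hAv : A *ᵥ v = σ₁ • u) (hATu : Aᵀ *ᵥ u = σ₁ • v)
    (i j : Fin n) (Atil : Matrix (Fin n) (Fin n) ℝ)
    (hAtil : Atil = A + Matrix.single i j 1)
    (s : ℝ) (hs : IsGreatest (raySet (Atil * Atilᵀ)) s) :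
    IsGreatest (raySet (Atilᵀ * Atil)) s ∧
      s ≥ σ₁ ^ 2 + 2 * σ₁ * (u i * v j) + max (u i ^ 2) (v j ^ 2) := by
  have hs' := hs.raySet_transpose_mul
  have hAtilT_u : Atilᵀ *ᵥ u = σ₁ • v + u i • Pi.single j 1 := by
    rw [hAtil, transpose_add, transpose_single, add_single_one_mulVec hATu]
  have hAtil_v : Atil *ᵥ v = σ₁ • u + v j • Pi.single i 1 := by
    rw [hAtil, add_single_one_mulVec hAv]
  have hbound_u := hs.2 ⟨u, hu, rfl⟩
  have hbound_v := hs'.2 ⟨v, hv, rfl⟩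
  rw [dotProduct_mul_transpose_mulVec, hAtilT_u, dotProduct_self_smul_add_smul_single, hv]
    at hbound_u
  rw [dotProduct_transpose_mul_mulVec, hAtil_v, dotProduct_self_smul_add_smul_single, hu]
    at hbound_v
  refine ⟨hs', ?_⟩
  rw [ge_iff_le, ← max_add_add_left]
  exact max_le (by linarith) (by linarith)

/-- Adding the (virtual) edge `(i,j)` to `A`: the largest eigenvalue `σ̃₁²` of the new hub
matrix `AtilAtilᵀ` (which equals the largest eigenvalue of the new authority matrix `AtilᵀAtil`)
satisfies `σ̃₁² ≥ σ₁² + 2σ₁ u(i) v(j) + max{u(i)², v(j)²}`. -/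
theorem stmt_5 {n : ℕ} (A : Matrix (Fin n) (Fin n) ℝ) (σ₁ : ℝ) (hσ : 0 < σ₁)
    (u v : Fin n → ℝ) (hu : u ⬝ᵥ u = 1) (hv : v ⬝ᵥ v = 1)
    (hAv : A *ᵥ v = σ₁ • u) (hATu : Aᵀ *ᵥ u = σ₁ • v)
    (i j : Fin n) (Atil : Matrix (Fin n) (Fin n) ℝ)
    (hAtil : Atil = A + Matrix.single i j 1)
    (s : ℝ) (hs : IsGreatest (raySet (Atil * Atilᵀ)) s) :
    IsGreatest (raySet (Atilᵀ * Atil)) s ∧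
      s ≥ σ₁ ^ 2 + 2 * σ₁ * (u i * v j) + max (u i ^ 2) (v j ^ 2) :=
  stmt_5_general A σ₁ u v hu hv hAv hATu i j Atil hAtil s hs
end

section
/- Let U and V be n×n real orthogonal matrices, d : {1,…,n} → ℝ, and A = U diag(d) Vᵀ. If all entries of A are nonnegative, then all entries of the generalized hyperbolic sine sinh^⋄(A) = U diag(sinh(d_k)) Vᵀ are nonnegative, and likewise all entries of cosh(√(AAᵀ)) = U diag(cosh(d_k)) Uᵀ and of cosh(√(AᵀA)) = V diag(cosh(d_k)) Vᵀ are nonnegative. -/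
/-! The bipartite lift of `A = U diag(d) Vᵀ` is the conjugate of the lift of `D = diag(d)` by the
orthogonal matrix `diag(U, V)`, and the lift of `D` is diagonalised by `[[1, 1], [1, -1]]` with
eigenvalues `±d`, so its exponential is `[[cosh D, sinh D], [sinh D, cosh D]]`. Hence the blocks of
`exp 𝒜` are `U cosh(D) Uᵀ`, `U sinh(D) Vᵀ`, `V sinh(D) Uᵀ` and `V cosh(D) Vᵀ`, and they are
entrywise nonnegative because `𝒜`, hence every term of its exponential series, is. Finally
`U |D| Uᵀ` squares to `A Aᵀ = U D² Uᵀ`, so it is `√(A Aᵀ)`, which identifies `U cosh(D) Uᵀ` with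
`cosh √(A Aᵀ)` (and symmetrically for `Aᵀ A`). -/

open Matrix

section OldSqrt

open scoped ComplexOrder

/-- The positive semidefinite square root of a positive semidefinite matrix
(the Mathlib definition of December 2024, since removed). -/
noncomputable def Matrix.PosSemidef.sqrt {n 𝕜 : Type*} [Fintype n] [DecidableEq n] [RCLike 𝕜]
    {A : Matrix n n 𝕜} (hA : A.PosSemidef) : Matrix n n 𝕜 :=
  hA.1.eigenvectorUnitary.1 * diagonal ((↑) ∘ (√·) ∘ hA.1.eigenvalues) *
  (star hA.1.eigenvectorUnitary : Matrix n n 𝕜)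

end OldSqrt

/-- `cosh (√M) = (exp (√M) + exp (-√M)) / 2` for a PSD matrix `M`. -/
noncomputable def coshSqrt {n : ℕ} (M : Matrix (Fin n) (Fin n) ℝ) (hM : M.PosSemidef) :
    Matrix (Fin n) (Fin n) ℝ :=
  ((1 : ℝ) / 2) • (NormedSpace.exp hM.sqrt + NormedSpace.exp (-hM.sqrt))

lemma psd_mul_transpose {n : ℕ} (A : Matrix (Fin n) (Fin n) ℝ) : (A * Aᵀ).PosSemidef := by
  simpa [Matrix.conjTranspose_eq_transpose_of_trivial] using
    Matrix.posSemidef_self_mul_conjTranspose A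

lemma psd_transpose_mul {n : ℕ} (A : Matrix (Fin n) (Fin n) ℝ) : (Aᵀ * A).PosSemidef := by
  simpa [Matrix.conjTranspose_eq_transpose_of_trivial] using
    Matrix.posSemidef_conjTranspose_mul_self A

namespace Matrix

variable {m n m' n' : Type*}

def bipartiteLift {α : Type*} [Zero α] (A : Matrix m n α) : Matrix (m ⊕ n) (m ⊕ n) α :=
  fromBlocks 0 A Aᵀ 0

theorem bipartiteLift_apply_nonneg {α : Type*} [Zero α] [Preorder α] {A : Matrix m n α}
    (hA : ∀ i j, 0 ≤ A i j) : ∀ i j, 0 ≤ bipartiteLift A i j := by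
  rintro (i | i) (j | j) <;> simp [bipartiteLift, hA]

section CommSemiring

variable {α : Type*} [CommSemiring α] [Fintype m] [Fintype n]

theorem bipartiteLift_mul_mul_transpose (U : Matrix m' m α) (X : Matrix m n α)
    (V : Matrix n' n α) :
    bipartiteLift (U * X * Vᵀ) =
      fromBlocks U 0 0 V * bipartiteLift X * (fromBlocks U 0 0 V)ᵀ := by
  simp [bipartiteLift, fromBlocks_transpose, fromBlocks_multiply, transpose_mul, Matrix.mul_assoc]

variable [DecidableEq m]

theorem fromBlocks_transpose_mul_self [DecidableEq n] {U : Matrix m m α} {V : Matrix n n α}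
    (hU : Uᵀ * U = 1) (hV : Vᵀ * V = 1) :
    (fromBlocks U 0 0 V)ᵀ * fromBlocks U 0 0 V = 1 := by
  simp [fromBlocks_transpose, fromBlocks_multiply, hU, hV]

theorem mul_mul_transpose_mul_mul_mul (U : Matrix m' m α) (X Y : Matrix m m α)
    {V : Matrix n m α} (W : Matrix n' m α) (hV : Vᵀ * V = 1) :
    U * X * Vᵀ * (V * Y * Wᵀ) = U * (X * Y) * Wᵀ := by
  simp only [Matrix.mul_assoc, ← Matrix.mul_assoc Vᵀ, hV, Matrix.one_mul]

end CommSemiring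

variable [Fintype m] [DecidableEq m]

theorem exp_apply_nonneg {M : Matrix m m ℝ} (hM : ∀ i j, 0 ≤ M i j) (i j : m) :
    0 ≤ NormedSpace.exp M i j := by
  -- any normed-ring structure on matrices will do to make the exponential series summable
  let : NormedRing (Matrix m m ℝ) := Matrix.linftyOpNormedRing
  let : NormedAlgebra ℝ (Matrix m m ℝ) := Matrix.linftyOpNormedAlgebra
  have hsum : HasSum (fun k : ℕ => (k.factorial⁻¹ : ℝ) • M ^ k) (NormedSpace.exp M) := by
    rw [NormedSpace.exp_eq_tsum ℝ]
    exact (NormedSpace.expSeries_summable' M).hasSum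
  have hij : HasSum (fun k : ℕ => (k.factorial⁻¹ : ℝ) * (M ^ k) i j) (NormedSpace.exp M i j) :=
    Pi.hasSum.mp (Pi.hasSum.mp hsum i) j
  exact hasSum_le (fun k => mul_nonneg (by positivity) (pow_apply_nonneg hM k i j)) hasSum_zero hij

theorem exp_conj_of_transpose_mul_self {U : Matrix m m ℝ} (hU : Uᵀ * U = 1) (M : Matrix m m ℝ) :
    NormedSpace.exp (U * M * Uᵀ) = U * NormedSpace.exp M * Uᵀ := by
  rw [← inv_eq_left_inv hU]
  exact exp_conj U M (IsUnit.of_mul_eq_one_right _ hU)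

theorem fromBlocks_one_one_one_neg_one_mul_half_smul_self :
    (fromBlocks 1 1 1 (-1) : Matrix (m ⊕ m) (m ⊕ m) ℝ) * ((2⁻¹ : ℝ) • fromBlocks 1 1 1 (-1)) =
      1 := by
  rw [mul_smul_comm, fromBlocks_multiply, ← fromBlocks_one, fromBlocks_smul]
  congr 1 <;> simp [← two_smul ℝ (1 : Matrix m m ℝ), smul_smul]

theorem fromBlocks_one_one_one_neg_one_inv :
    (fromBlocks 1 1 1 (-1) : Matrix (m ⊕ m) (m ⊕ m) ℝ)⁻¹ = (2⁻¹ : ℝ) • fromBlocks 1 1 1 (-1) :=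
  inv_eq_right_inv fromBlocks_one_one_one_neg_one_mul_half_smul_self

theorem fromBlocks_conj_fromBlocks_diag (E F : Matrix m m ℝ) :
    fromBlocks 1 1 1 (-1) * fromBlocks E 0 0 F * (fromBlocks 1 1 1 (-1))⁻¹ =
      (2⁻¹ : ℝ) • fromBlocks (E + F) (E - F) (E - F) (E + F) := by
  rw [fromBlocks_one_one_one_neg_one_inv, mul_smul_comm]
  simp [fromBlocks_multiply, sub_eq_add_neg]

theorem exp_bipartiteLift_diagonal (d : m → ℝ) :
    NormedSpace.exp (bipartiteLift (diagonal d)) =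
      fromBlocks (diagonal fun k => Real.cosh (d k)) (diagonal fun k => Real.sinh (d k))
        (diagonal fun k => Real.sinh (d k)) (diagonal fun k => Real.cosh (d k)) := by
  have hQ : IsUnit (fromBlocks 1 1 1 (-1) : Matrix (m ⊕ m) (m ⊕ m) ℝ) :=
    IsUnit.of_mul_eq_one _ fromBlocks_one_one_one_neg_one_mul_half_smul_self
  have hlift : bipartiteLift (diagonal d) =
      fromBlocks 1 1 1 (-1) * fromBlocks (diagonal d) 0 0 (-diagonal d) *
        (fromBlocks 1 1 1 (-1))⁻¹ := by
    rw [fromBlocks_conj_fromBlocks_diag, bipartiteLift, diagonal_transpose, sub_neg_eq_add,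
      add_neg_cancel, ← two_smul ℝ (diagonal d), fromBlocks_smul, smul_smul]
    norm_num
  have hexp : NormedSpace.exp (fromBlocks (diagonal d) 0 0 (-diagonal d)) =
      fromBlocks (diagonal fun k => Real.exp (d k)) 0 0 (diagonal fun k => Real.exp (-d k)) := by
    rw [diagonal_neg, fromBlocks_diagonal, exp_diagonal, fromBlocks_diagonal]
    congr 1
    ext (k | k) <;> simp [Real.exp_eq_exp_ℝ]
  rw [hlift, exp_conj _ _ hQ, hexp, fromBlocks_conj_fromBlocks_diag, fromBlocks_smul,
    diagonal_add, diagonal_sub]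
  simp only [← diagonal_smul]
  congr <;> ext k <;>
    simp only [Pi.smul_apply, smul_eq_mul, Real.cosh_eq, Real.sinh_eq] <;> ring

theorem exp_bipartiteLift_mul_diagonal_mul_transpose {U V : Matrix m m ℝ} (hU : Uᵀ * U = 1)
    (hV : Vᵀ * V = 1) (d : m → ℝ) :
    NormedSpace.exp (bipartiteLift (U * diagonal d * Vᵀ)) =
      fromBlocks (U * diagonal (fun k => Real.cosh (d k)) * Uᵀ)
        (U * diagonal (fun k => Real.sinh (d k)) * Vᵀ)
        (V * diagonal (fun k => Real.sinh (d k)) * Uᵀ)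
        (V * diagonal (fun k => Real.cosh (d k)) * Vᵀ) := by
  rw [bipartiteLift_mul_mul_transpose,
    exp_conj_of_transpose_mul_self (fromBlocks_transpose_mul_self hU hV),
    exp_bipartiteLift_diagonal]
  simp [fromBlocks_transpose, fromBlocks_multiply, Matrix.mul_assoc]

open scoped MatrixOrder ComplexOrder in
theorem PosSemidef.sqrt_eq_of_mul_self {𝕜 : Type*} [RCLike 𝕜] {M B : Matrix m m 𝕜}
    (hM : M.PosSemidef) (hB : B.PosSemidef) (h : B * B = M) : hM.sqrt = B := by
  have hsqrt : hM.sqrt = CFC.sqrt M := by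
    rw [CFC.sqrt_eq_cfc, cfc_nnreal_eq_real _ M hM.nonneg, hM.1.cfc_eq]
    simp only [PosSemidef.sqrt, IsHermitian.cfc, Unitary.conjStarAlgAut_apply]
    congr 3
    funext i
    simp [Real.coe_sqrt, hM.eigenvalues_nonneg i]
  rw [hsqrt]
  exact CFC.sqrt_unique h hB.nonneg

end Matrix

theorem coshSqrt_eq_of_eq_mul_diagonal_mul_transpose {n : ℕ} {M U : Matrix (Fin n) (Fin n) ℝ}
    (hM : M.PosSemidef) (hU : Uᵀ * U = 1) {d : Fin n → ℝ}
    (hMd : M = U * diagonal (fun k => d k * d k) * Uᵀ) :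
    coshSqrt M hM = U * diagonal (fun k => Real.cosh (d k)) * Uᵀ := by
  have habs : (diagonal fun k => |d k|).PosSemidef :=
    posSemidef_diagonal_iff.mpr fun k => abs_nonneg (d k)
  have hsqrt : hM.sqrt = U * diagonal (fun k => |d k|) * Uᵀ := by
    refine hM.sqrt_eq_of_mul_self ?_ ?_
    · simpa using habs.mul_mul_conjTranspose_same U
    · rw [mul_mul_transpose_mul_mul_mul _ _ _ _ hU, diagonal_mul_diagonal, hMd]
      simp_rw [abs_mul_abs_self]
  rw [coshSqrt, hsqrt, ← Matrix.neg_mul, ← Matrix.mul_neg, diagonal_neg,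
    exp_conj_of_transpose_mul_self hU, exp_conj_of_transpose_mul_self hU, exp_diagonal,
    exp_diagonal, ← Matrix.add_mul, ← Matrix.mul_add, ← Matrix.smul_mul, ← Matrix.mul_smul,
    diagonal_add, ← diagonal_smul]
  congr 3
  ext k
  simp only [Pi.coe_exp, ← Real.exp_eq_exp_ℝ, Pi.smul_apply, smul_eq_mul, ← Real.cosh_abs (d k),
    Real.cosh_eq]
  ring

/-- For orthogonal `U`, `V` and `A = U diag(d) Vᵀ` with all entries of `A` nonnegative,
all entries of the generalized hyperbolic sine `sinh^⋄(A) = U diag(sinh d_k) Vᵀ` are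
nonnegative, and likewise all entries of `cosh(√(AAᵀ)) = U diag(cosh d_k) Uᵀ` and of
`cosh(√(AᵀA)) = V diag(cosh d_k) Vᵀ` are nonnegative. -/
theorem stmt_12 {n : ℕ} (U V A : Matrix (Fin n) (Fin n) ℝ) (d : Fin n → ℝ)
    (hU : Uᵀ * U = 1) (hV : Vᵀ * V = 1)
    (hA : A = U * Matrix.diagonal d * Vᵀ)
    (hApos : ∀ p q, 0 ≤ A p q) :
    (∀ p q, 0 ≤ (U * Matrix.diagonal (fun k => Real.sinh (d k)) * Vᵀ) p q) ∧
    (∀ p q, 0 ≤ (U * Matrix.diagonal (fun k => Real.cosh (d k)) * Uᵀ) p q) ∧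
    (∀ p q, 0 ≤ (V * Matrix.diagonal (fun k => Real.cosh (d k)) * Vᵀ) p q) ∧
    U * Matrix.diagonal (fun k => Real.cosh (d k)) * Uᵀ =
      coshSqrt (A * Aᵀ) (psd_mul_transpose A) ∧
    V * Matrix.diagonal (fun k => Real.cosh (d k)) * Vᵀ =
      coshSqrt (Aᵀ * A) (psd_transpose_mul A) := by
  have hAT : Aᵀ = V * diagonal d * Uᵀ := by
    simp [hA, transpose_mul, Matrix.mul_assoc]
  have hexp := exp_apply_nonneg (bipartiteLift_apply_nonneg hApos)
  rw [hA, exp_bipartiteLift_mul_diagonal_mul_transpose hU hV] at hexp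
  refine ⟨fun p q => by simpa using hexp (.inl p) (.inr q),
    fun p q => by simpa using hexp (.inl p) (.inl q),
    fun p q => by simpa using hexp (.inr p) (.inr q), ?_, ?_⟩
  · refine (coshSqrt_eq_of_eq_mul_diagonal_mul_transpose _ hU ?_).symm
    rw [hAT, hA, mul_mul_transpose_mul_mul_mul _ _ _ _ hV, diagonal_mul_diagonal]
  · refine (coshSqrt_eq_of_eq_mul_diagonal_mul_transpose _ hV ?_).symm
    rw [hAT, hA, mul_mul_transpose_mul_mul_mul _ _ _ _ hU, diagonal_mul_diagonal]
end

section
/- Let A be an n×n real matrix, fix indices i, j, and let Ã = A + e_i e_jᵀ. Then (1ᵀÃÃᵀ1 + 1ᵀÃᵀÃ1) − (1ᵀAAᵀ1 + 1ᵀAᵀA1) = 2(d_out(i) + d_in(j) + 1), where d_out = A1 and d_in = Aᵀ1. Consequently, under the second-order Maclaurin approximation cosh(√X) ≈ I + X/2 (X = AAᵀ or AᵀA), adding the edge (i,j) increases T_hC(A) + T_aC(A) by exactly d_out(i) + d_in(j) + 1, so the degree heuristic that maximizes d_out(i) + d_in(j) is optimal for this approximation. -/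
/-!
Since `vᵀ (M Mᵀ) v = ‖Mᵀ v‖²`, both Gram sums are squared norms of degree vectors. Adding the
edge `(i, j)` shifts `Aᵀ 1` by `e_j` and `A 1` by `e_i`, so the two squared norms grow by
`2 d_in(j) + 1` and `2 d_out(i) + 1`; the Maclaurin approximation halves the total.
-/

open Matrix

namespace Matrix

variable {m k R : Type*} [CommRing R]

theorem dotProduct_mul_transpose_mulVec [Fintype m] [Fintype k] (M : Matrix m k R)
    (v : m → R) :
    v ⬝ᵥ ((M * Mᵀ) *ᵥ v) = (Mᵀ *ᵥ v) ⬝ᵥ (Mᵀ *ᵥ v) := by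
  rw [← mulVec_mulVec, dotProduct_mulVec, ← mulVec_transpose]

theorem add_single_mulVec [Fintype k] [DecidableEq m] [DecidableEq k] (A : Matrix m k R)
    (i : m) (j : k) (c : R) (v : k → R) :
    (A + single i j c) *ᵥ v = A *ᵥ v + Pi.single i (c * v j) := by
  rw [add_mulVec, single_mulVec, Pi.single]

theorem add_single_dotProduct_self [Fintype m] [DecidableEq m] (u : m → R) (i : m) (a : R) :
    (u + Pi.single i a) ⬝ᵥ (u + Pi.single i a) = u ⬝ᵥ u + 2 * a * u i + a * a := by
  simp only [add_dotProduct, dotProduct_add, single_dotProduct, dotProduct_single,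
    Pi.add_apply, Pi.single_eq_same]
  ring

theorem dotProduct_add_single_mul_transpose_mulVec [Fintype m] [Fintype k] [DecidableEq m]
    [DecidableEq k] (A : Matrix m k R) (i : m) (j : k) (c : R) (v : m → R) :
    v ⬝ᵥ (((A + single i j c) * (A + single i j c)ᵀ) *ᵥ v)
      = v ⬝ᵥ ((A * Aᵀ) *ᵥ v) + 2 * (c * v i) * (Aᵀ *ᵥ v) j + (c * v i) * (c * v i) := by
  rw [dotProduct_mul_transpose_mulVec, dotProduct_mul_transpose_mulVec, transpose_add,
    transpose_single, add_single_mulVec, add_single_dotProduct_self]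

theorem dotProduct_transpose_add_single_mul_mulVec [Fintype m] [Fintype k] [DecidableEq m]
    [DecidableEq k] (A : Matrix m k R) (i : m) (j : k) (c : R) (v : k → R) :
    v ⬝ᵥ (((A + single i j c)ᵀ * (A + single i j c)) *ᵥ v)
      = v ⬝ᵥ ((Aᵀ * A) *ᵥ v) + 2 * (c * v j) * (A *ᵥ v) i + (c * v j) * (c * v j) := by
  simpa only [transpose_add, transpose_single, transpose_transpose] using
    dotProduct_add_single_mul_transpose_mulVec Aᵀ j i c v

theorem dotProduct_one_add_smul_mulVec [Fintype m] [DecidableEq m] (X : Matrix m m R) (c : R)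
    (v : m → R) :
    v ⬝ᵥ ((1 + c • X) *ᵥ v) = v ⬝ᵥ v + c * (v ⬝ᵥ (X *ᵥ v)) := by
  rw [add_mulVec, one_mulVec, smul_mulVec, dotProduct_add, dotProduct_smul, smul_eq_mul]

end Matrix

/-- Adding the edge `(i,j)` changes `1ᵀÃÃᵀ1 + 1ᵀÃᵀÃ1` by exactly
`2(d_out(i) + d_in(j) + 1)`; consequently, under the second-order Maclaurin approximation
`cosh(√X) ≈ I + X/2`, adding the edge `(i,j)` increases `T_hC(A) + T_aC(A)` by exactly
`d_out(i) + d_in(j) + 1` (so the degree heuristic maximizing `d_out(i) + d_in(j)` is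
optimal for this approximation). -/
theorem stmt_15 {n : ℕ} (A : Matrix (Fin n) (Fin n) ℝ) (i j : Fin n)
    (Atil : Matrix (Fin n) (Fin n) ℝ) (hAtil : Atil = A + Matrix.single i j 1)
    (ones dOut dIn : Fin n → ℝ) (hones : ones = fun _ => 1)
    (hdOut : dOut = A *ᵥ ones) (hdIn : dIn = Aᵀ *ᵥ ones) :
    (ones ⬝ᵥ ((Atil * Atilᵀ) *ᵥ ones) + ones ⬝ᵥ ((Atilᵀ * Atil) *ᵥ ones))
        - (ones ⬝ᵥ ((A * Aᵀ) *ᵥ ones) + ones ⬝ᵥ ((Aᵀ * A) *ᵥ ones))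
      = 2 * (dOut i + dIn j + 1) ∧
    (ones ⬝ᵥ ((1 + ((1 : ℝ) / 2) • (Atil * Atilᵀ)) *ᵥ ones)
        + ones ⬝ᵥ ((1 + ((1 : ℝ) / 2) • (Atilᵀ * Atil)) *ᵥ ones))
      - (ones ⬝ᵥ ((1 + ((1 : ℝ) / 2) • (A * Aᵀ)) *ᵥ ones)
        + ones ⬝ᵥ ((1 + ((1 : ℝ) / 2) • (Aᵀ * A)) *ᵥ ones))
      = dOut i + dIn j + 1 := by
  subst hAtil hones hdOut hdIn
  have hub := dotProduct_add_single_mul_transpose_mulVec A i j 1 fun _ => 1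
  have auth := dotProduct_transpose_add_single_mul_mulVec A i j 1 fun _ => 1
  simp only [mul_one] at hub auth
  constructor
  · linarith
  · simp only [dotProduct_one_add_smul_mulVec]
    linarith
end
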